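/- In an imbrex geometry of symplectic rank 2, any point p not contained in a maximal singular subspace B is collinear with exactly one point of B. -/
import Mathlib


namespace ImbrexGeom

variable {P : Type*}

/-- Two points are collinear: equal or on a common line. -/
def Col (Ls : Set (Set P)) (x y : P) : Prop :=
  x = y ∨ ∃ L ∈ Ls, x ∈ L ∧ y ∈ L

/-- A line of the geometry induced on a subset `S`. -/
def LineIn (Ls : Set (Set P)) (S : Set P) (L : Set P) : Prop :=
  L ∈ Ls ∧ L ⊆ S

/-- Collinearity inside the geometry induced on `S`. -/
def ColIn (Ls : Set (Set P)) (S : Set P) (x y : P) : Prop :=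
  x = y ∨ ∃ L, LineIn Ls S L ∧ x ∈ L ∧ y ∈ L

/-- A subspace of the geometry induced on `S`. -/
def IsSubspaceIn (Ls : Set (Set P)) (S T : Set P) : Prop :=
  T ⊆ S ∧ ∀ L, LineIn Ls S L → ∀ x ∈ L, ∀ y ∈ L, x ≠ y → x ∈ T → y ∈ T → L ⊆ T

def IsSubspace (Ls : Set (Set P)) (T : Set P) : Prop :=
  IsSubspaceIn Ls Set.univ T

/-- A convex subspace (adapted to diameter 2): closed under taking common
neighbours of non-collinear pairs, i.e. all points on shortest paths. -/
def IsConvex (Ls : Set (Set P)) (S : Set P) : Prop :=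
  IsSubspace Ls S ∧ ∀ x ∈ S, ∀ y ∈ S, ¬ Col Ls x y →
    ∀ z, Col Ls x z → Col Ls z y → z ∈ S

/-- `S` is the smallest convex subspace containing `x` and `y`. -/
def SmallestConvex (Ls : Set (Set P)) (x y : P) (S : Set P) : Prop :=
  IsConvex Ls S ∧ x ∈ S ∧ y ∈ S ∧
    ∀ S', IsConvex Ls S' → x ∈ S' → y ∈ S' → S ⊆ S'

/-- A singular subspace of the geometry induced on `S`. -/
def IsSingularIn (Ls : Set (Set P)) (S T : Set P) : Prop :=
  IsSubspaceIn Ls S T ∧ ∀ x ∈ T, ∀ y ∈ T, ColIn Ls S x y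

def IsSingular (Ls : Set (Set P)) (T : Set P) : Prop :=
  IsSingularIn Ls Set.univ T

/-- A maximal singular subspace of the geometry induced on `S`. -/
def MaxSingularIn (Ls : Set (Set P)) (S T : Set P) : Prop :=
  IsSingularIn Ls S T ∧ ∀ T', IsSingularIn Ls S T' → T ⊆ T' → T' = T

/-- A block: a maximal singular subspace of the whole geometry. -/
def IsBlock (Ls : Set (Set P)) (B : Set P) : Prop :=
  MaxSingularIn Ls Set.univ B

/-- The geometry induced on `S` has polar rank `r`: every nested (strictly
increasing) sequence of singular subspaces has length at most `r + 1`, and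
one of length `r + 1` exists. -/
def HasPolarRank (Ls : Set (Set P)) (S : Set P) (r : ℕ) : Prop :=
  (∀ n : ℕ, ∀ f : Fin n → Set P, (∀ i, IsSingularIn Ls S (f i)) →
      (∀ i j, i < j → f i ⊂ f j) → n ≤ r + 1) ∧
  ∃ f : Fin (r + 1) → Set P, (∀ i, IsSingularIn Ls S (f i)) ∧
      ∀ i j : Fin (r + 1), i < j → f i ⊂ f j

/-- The geometry induced on `S` is a polar space of rank `r`
(Buekenhout–Shult axioms). -/
def IsPolarSpace (Ls : Set (Set P)) (S : Set P) (r : ℕ) : Prop :=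
  (∀ L, LineIn Ls S L → ∃ x ∈ L, ∃ y ∈ L, ∃ z ∈ L, x ≠ y ∧ x ≠ z ∧ y ≠ z) ∧
  (∀ x ∈ S, ∃ y ∈ S, ¬ ColIn Ls S x y) ∧
  HasPolarRank Ls S r ∧
  (∀ x ∈ S, ∀ L, LineIn Ls S L → x ∉ L →
      (∃! y, y ∈ L ∧ ColIn Ls S x y) ∨ ∀ y ∈ L, ColIn Ls S x y)

/-- A strong parapolar space of diameter 2. -/
structure StrongParapolar2 (Ls : Set (Set P)) : Prop where
  connected : ∀ x y : P, Relation.ReflTransGen (Col Ls) x y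
  pps1 : ∀ x : P, ∀ L ∈ Ls, x ∉ L →
      (∀ y ∈ L, ¬ Col Ls x y) ∨ (∃! y, y ∈ L ∧ Col Ls x y) ∨ ∀ y ∈ L, Col Ls x y
  pps1_none : ∃ x : P, ∃ L ∈ Ls, ∀ y ∈ L, ¬ Col Ls x y
  pps1_one : ∃ x : P, ∃ L ∈ Ls, x ∉ L ∧ ∃! y, y ∈ L ∧ Col Ls x y
  pps1_all : ∃ x : P, ∃ L ∈ Ls, x ∉ L ∧ ∀ y ∈ L, Col Ls x y
  pps2 : ∀ x y : P, ¬ Col Ls x y →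
      ∃ S, SmallestConvex Ls x y S ∧ ∃ r, 2 ≤ r ∧ IsPolarSpace Ls S r

/-- A symplecton: the smallest convex subspace of a non-collinear pair. -/
def IsSymp (Ls : Set (Set P)) (S : Set P) : Prop :=
  ∃ x y, ¬ Col Ls x y ∧ SmallestConvex Ls x y S

/-- (PPS4): every nested sequence of singular subspaces has finite length. -/
def PPS4 (Ls : Set (Set P)) : Prop :=
  ∀ f : ℕ → Set P, (∀ n, IsSingular Ls (f n)) → ¬ ∀ n, f n ⊂ f (n + 1)

/-- The imbrex axiom (Imb). -/
def Imb (Ls : Set (Set P)) : Prop :=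
  ∀ x : P, ∀ L ∈ Ls, (∀ y ∈ L, ¬ Col Ls x y) →
    ∀ y₁ ∈ L, ∀ y₂ ∈ L, y₁ ≠ y₂ →
      ∀ S₁ S₂, SmallestConvex Ls x y₁ S₁ → SmallestConvex Ls x y₂ S₂ →
        MaxSingularIn Ls S₁ (S₁ ∩ S₂) ∧ MaxSingularIn Ls S₂ (S₁ ∩ S₂)

/-- An imbrex geometry. -/
structure ImbrexGeometry (Ls : Set (Set P)) : Prop where
  spp : StrongParapolar2 Ls
  pps4 : PPS4 Ls
  imb : Imb Ls

/-- The geometry has symplectic rank `r`: all symplecta have polar rank `r`. -/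
def SympRank (Ls : Set (Set P)) (r : ℕ) : Prop :=
  ∀ S, IsSymp Ls S → HasPolarRank Ls S r

/-- All symplecta are thick generalized quadrangles: every point of a
symplecton lies on at least three lines of it (lines already have at least
three points by the polar space axioms). -/
def ThickSymps (Ls : Set (Set P)) : Prop :=
  ∀ S, IsSymp Ls S → ∀ x ∈ S, ∃ L₁ L₂ L₃, LineIn Ls S L₁ ∧ LineIn Ls S L₂ ∧
    LineIn Ls S L₃ ∧ L₁ ≠ L₂ ∧ L₁ ≠ L₃ ∧ L₂ ≠ L₃ ∧ x ∈ L₁ ∧ x ∈ L₂ ∧ x ∈ L₃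

/-- The perp of a set of lines in the geometry induced on `S`: all lines of
`S` concurrent with every member of the set. -/
def PerpSet (Ls : Set (Set P)) (S : Set P) (T : Set (Set P)) : Set (Set P) :=
  {N | LineIn Ls S N ∧ ∀ M ∈ T, (N ∩ M).Nonempty}

/-- A pair of lines is regular. -/
def RegularPair (Ls : Set (Set P)) (S : Set P) (L M : Set P) : Prop :=
  ∃ L' M', L' ∈ PerpSet Ls S {L, M} ∧ M' ∈ PerpSet Ls S {L, M} ∧ L' ≠ M' ∧
    PerpSet Ls S (PerpSet Ls S {L, M}) = PerpSet Ls S {L', M'}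

/-- `N` is a member of the spread of the symplecton `H` induced by the
block `B`: `N = B' ∩ H` for some block `B'` meeting `B`. -/
def InSpreadOf (Ls : Set (Set P)) (H B : Set P) (N : Set P) : Prop :=
  ∃ B', IsBlock Ls B' ∧ (B' ∩ B).Nonempty ∧ N = B' ∩ H

section Aux

variable {Ls : Set (Set P)}

lemma col_refl (Ls : Set (Set P)) (x : P) : Col Ls x x := Or.inl rfl

lemma col_symm {x y : P} (h : Col Ls x y) : Col Ls y x := by
  rcases h with rfl | ⟨L, hL, hx, hy⟩
  · exact Or.inl rfl
  · exact Or.inr ⟨L, hL, hy, hx⟩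

lemma colIn_refl (S : Set P) (x : P) : ColIn Ls S x x := Or.inl rfl

lemma colIn_symm {S : Set P} {x y : P} (h : ColIn Ls S x y) : ColIn Ls S y x := by
  rcases h with rfl | ⟨L, hL, hx, hy⟩
  · exact Or.inl rfl
  · exact Or.inr ⟨L, hL, hy, hx⟩

lemma colIn_col {S : Set P} {x y : P} (h : ColIn Ls S x y) : Col Ls x y := by
  rcases h with rfl | ⟨L, hL, hx, hy⟩
  · exact Or.inl rfl
  · exact Or.inr ⟨L, hL.1, hx, hy⟩

lemma colIn_univ_iff {x y : P} : ColIn Ls Set.univ x y ↔ Col Ls x y := by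
  constructor
  · exact colIn_col
  · rintro (rfl | ⟨L, hL, hx, hy⟩)
    · exact Or.inl rfl
    · exact Or.inr ⟨L, ⟨hL, Set.subset_univ L⟩, hx, hy⟩

lemma colIn_of_col {S : Set P} (hS : IsSubspace Ls S) {x y : P}
    (hx : x ∈ S) (hy : y ∈ S) (h : Col Ls x y) : ColIn Ls S x y := by
  rcases h with rfl | ⟨L, hL, hxL, hyL⟩
  · exact Or.inl rfl
  · by_cases hxy : x = y
    · exact Or.inl hxy
    · have hsub : L ⊆ S := hS.2 L ⟨hL, Set.subset_univ L⟩ x hxL y hyL hxy hx hy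
      exact Or.inr ⟨L, ⟨hL, hsub⟩, hxL, hyL⟩

/-- The span of a set inside the geometry induced on `S`. -/
def spanIn (Ls : Set (Set P)) (S X : Set P) : Set P :=
  ⋂₀ {T | IsSubspaceIn Ls S T ∧ X ⊆ T}

lemma isSubspaceIn_self (Ls : Set (Set P)) (S : Set P) : IsSubspaceIn Ls S S :=
  ⟨subset_rfl, fun L hL _ _ _ _ _ _ _ => hL.2⟩

lemma subset_spanIn (Ls : Set (Set P)) (S X : Set P) : X ⊆ spanIn Ls S X :=
  fun x hx => Set.mem_sInter.mpr (fun _ hT => hT.2 hx)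

lemma spanIn_subset {S X T : Set P} (hT : IsSubspaceIn Ls S T) (h : X ⊆ T) :
    spanIn Ls S X ⊆ T := fun _ hx => Set.mem_sInter.mp hx T ⟨hT, h⟩

lemma spanIn_isSubspaceIn {S X : Set P} (hX : X ⊆ S) :
    IsSubspaceIn Ls S (spanIn Ls S X) := by
  constructor
  · exact spanIn_subset (isSubspaceIn_self Ls S) hX
  · intro L hL x hx y hy hxy hxT hyT
    intro z hz
    exact Set.mem_sInter.mpr (fun T hT =>
      hT.1.2 L hL x hx y hy hxy (Set.mem_sInter.mp hxT T hT) (Set.mem_sInter.mp hyT T hT) hz)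

/-- the "gamma space" condition inside `S`. -/
def GammaIn (Ls : Set (Set P)) (S : Set P) : Prop :=
  ∀ x ∈ S, ∀ L, LineIn Ls S L → ∀ a ∈ L, ∀ b ∈ L, a ≠ b →
    ColIn Ls S x a → ColIn Ls S x b → ∀ y ∈ L, ColIn Ls S x y

def perpIn (Ls : Set (Set P)) (S : Set P) (x : P) : Set P :=
  {y ∈ S | ColIn Ls S x y}

lemma perpIn_isSubspaceIn {S : Set P} (hg : GammaIn Ls S) {x : P} (hx : x ∈ S) :
    IsSubspaceIn Ls S (perpIn Ls S x) := by
  refine ⟨fun y hy => hy.1, ?_⟩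
  intro L hL a ha b hb hab haT hbT y hy
  exact ⟨hL.2 hy, hg x hx L hL a ha b hb hab haT.2 hbT.2 y hy⟩

lemma spanIn_isSingularIn {S X : Set P} (hg : GammaIn Ls S) (hX : X ⊆ S)
    (hcl : ∀ a ∈ X, ∀ b ∈ X, ColIn Ls S a b) : IsSingularIn Ls S (spanIn Ls S X) := by
  have hsub : IsSubspaceIn Ls S (spanIn Ls S X) := spanIn_isSubspaceIn hX
  refine ⟨hsub, ?_⟩
  have step1 : ∀ z ∈ spanIn Ls S X, ∀ a ∈ X, ColIn Ls S z a := by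
    intro z hz a ha
    have hsp : spanIn Ls S X ⊆ perpIn Ls S a :=
      spanIn_subset (perpIn_isSubspaceIn hg (hX ha)) (fun b hb => ⟨hX hb, hcl a ha b hb⟩)
    exact colIn_symm (hsp hz).2
  intro z hz z' hz'
  have hsp : spanIn Ls S X ⊆ perpIn Ls S z :=
    spanIn_subset (perpIn_isSubspaceIn hg (hsub.1 hz))
      (fun a ha => ⟨hX ha, step1 z hz a ha⟩)
  exact (hsp hz').2

lemma empty_isSingularIn (Ls : Set (Set P)) (S : Set P) :
    IsSingularIn Ls S (∅ : Set P) :=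
  ⟨⟨Set.empty_subset S, fun _ _ _ _ _ _ _ hx _ => (Set.notMem_empty _ hx).elim⟩,
    fun x hx => (Set.notMem_empty x hx).elim⟩

lemma singleton_isSingularIn (Ls : Set (Set P)) {S : Set P} {x : P} (hx : x ∈ S) :
    IsSingularIn Ls S {x} := by
  refine ⟨⟨Set.singleton_subset_iff.mpr hx, ?_⟩, ?_⟩
  · intro L hL a ha b hb hab haT hbT
    exact absurd ((Set.mem_singleton_iff.mp haT).trans (Set.mem_singleton_iff.mp hbT).symm) hab
  · intro a ha b hb
    exact Or.inl ((Set.mem_singleton_iff.mp ha).trans (Set.mem_singleton_iff.mp hb).symm)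

lemma no_plane {S : Set P}
    (hrank : ∀ n : ℕ, ∀ f : Fin n → Set P, (∀ i, IsSingularIn Ls S (f i)) →
      (∀ i j, i < j → f i ⊂ f j) → n ≤ 3)
    (hg : GammaIn Ls S) {M0 : Set P} (hM0 : LineIn Ls S M0)
    {a b : P} (ha : a ∈ M0) (hb : b ∈ M0) (hab : a ≠ b)
    {x : P} (hx : x ∈ S) (hcol : ∀ y ∈ M0, ColIn Ls S x y)
    (hxs : x ∉ spanIn Ls S M0) : False := by
  have hM0S : M0 ⊆ S := hM0.2
  have hclM : ∀ u ∈ M0, ∀ v ∈ M0, ColIn Ls S u v := fun u hu v hv => Or.inr ⟨M0, hM0, hu, hv⟩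
  have h1 : IsSingularIn Ls S (spanIn Ls S M0) := spanIn_isSingularIn hg hM0S hclM
  have hXS : insert x M0 ⊆ S := Set.insert_subset hx hM0S
  have hclX : ∀ u ∈ insert x M0, ∀ v ∈ insert x M0, ColIn Ls S u v := by
    intro u hu v hv
    rcases hu with rfl | hu <;> rcases hv with rfl | hv
    · exact colIn_refl S _
    · exact hcol v hv
    · exact colIn_symm (hcol u hu)
    · exact hclM u hu v hv
  have h2 : IsSingularIn Ls S (spanIn Ls S (insert x M0)) := spanIn_isSingularIn hg hXS hclX
  have s01 : (∅ : Set P) ⊂ {a} := Set.empty_ssubset.mpr ⟨a, rfl⟩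
  have hasp : a ∈ spanIn Ls S M0 := subset_spanIn Ls S M0 ha
  have hbsp : b ∈ spanIn Ls S M0 := subset_spanIn Ls S M0 hb
  have s12 : ({a} : Set P) ⊂ spanIn Ls S M0 := by
    rw [Set.ssubset_iff_of_subset (Set.singleton_subset_iff.mpr hasp)]
    exact ⟨b, hbsp, fun h => hab (Set.mem_singleton_iff.mp h).symm⟩
  have hsub12 : spanIn Ls S M0 ⊆ spanIn Ls S (insert x M0) :=
    spanIn_subset h2.1 ((Set.subset_insert x M0).trans (subset_spanIn Ls S (insert x M0)))
  have s23 : spanIn Ls S M0 ⊂ spanIn Ls S (insert x M0) := by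
    rw [Set.ssubset_iff_of_subset hsub12]
    exact ⟨x, subset_spanIn Ls S (insert x M0) (Set.mem_insert x M0), hxs⟩
  refine absurd (hrank 4 ![∅, {a}, spanIn Ls S M0, spanIn Ls S (insert x M0)] ?_ ?_)
    (by omega)
  · intro i
    fin_cases i
    · exact empty_isSingularIn Ls S
    · exact singleton_isSingularIn Ls (hM0S ha)
    · exact h1
    · exact h2
  · intro i j hij
    fin_cases i <;> fin_cases j <;>
      first
        | exact absurd hij (by decide)
        | exact s01
        | exact s12
        | exact s23
        | exact s01.trans s12
        | exact s12.trans s23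
        | exact (s01.trans s12).trans s23

lemma no_plane' {S : Set P}
    (hrank : ∀ n : ℕ, ∀ f : Fin n → Set P, (∀ i, IsSingularIn Ls S (f i)) →
      (∀ i j, i < j → f i ⊂ f j) → n ≤ 3)
    (hg : GammaIn Ls S) {M0 : Set P} (hM0 : LineIn Ls S M0)
    {a b : P} (ha : a ∈ M0) (hb : b ∈ M0) (hab : a ≠ b)
    {x : P} (hx : x ∈ S) (hcol : ∀ y ∈ M0, ColIn Ls S x y)
    {w : P} (hw : w ∈ S) (hwM : ∀ y ∈ M0, ColIn Ls S w y)
    (hwx : ¬ ColIn Ls S w x) : False := by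
  refine no_plane hrank hg hM0 ha hb hab hx hcol ?_
  intro hxs
  exact hwx ((spanIn_subset (perpIn_isSubspaceIn hg hw)
    (fun y hy => ⟨hM0.2 hy, hwM y hy⟩)) hxs).2

lemma gammaIn_of_bs {S : Set P}
    (hbs : ∀ x ∈ S, ∀ L, LineIn Ls S L → x ∉ L →
      (∃! y, y ∈ L ∧ ColIn Ls S x y) ∨ ∀ y ∈ L, ColIn Ls S x y) :
    GammaIn Ls S := by
  intro x hx L hL a ha b hb hab hxa hxb y hy
  by_cases hxL : x ∈ L
  · exact Or.inr ⟨L, hL, hxL, hy⟩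
  · rcases hbs x hx L hL hxL with ⟨u, _, huniq⟩ | hall
    · exact absurd ((huniq a ⟨ha, hxa⟩).trans (huniq b ⟨hb, hxb⟩).symm) hab
    · exact hall y hy

lemma gamma_col
    (hpps1 : ∀ x : P, ∀ L ∈ Ls, x ∉ L →
      (∀ y ∈ L, ¬ Col Ls x y) ∨ (∃! y, y ∈ L ∧ Col Ls x y) ∨ ∀ y ∈ L, Col Ls x y)
    {x : P} {L : Set P} (hL : L ∈ Ls) {a b : P} (ha : a ∈ L) (hb : b ∈ L)
    (hab : a ≠ b) (hxa : Col Ls x a) (hxb : Col Ls x b) :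
    ∀ y ∈ L, Col Ls x y := by
  by_cases hxL : x ∈ L
  · exact fun y hy => Or.inr ⟨L, hL, hxL, hy⟩
  · rcases hpps1 x L hL hxL with hnone | ⟨u, _, huniq⟩ | hall
    · exact absurd hxa (hnone a ha)
    · exact absurd ((huniq a ⟨ha, hxa⟩).trans (huniq b ⟨hb, hxb⟩).symm) hab
    · exact hall

lemma gammaIn_univ
    (hpps1 : ∀ x : P, ∀ L ∈ Ls, x ∉ L →
      (∀ y ∈ L, ¬ Col Ls x y) ∨ (∃! y, y ∈ L ∧ Col Ls x y) ∨ ∀ y ∈ L, Col Ls x y) :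
    GammaIn Ls Set.univ := by
  intro x _ L hL a ha b hb hab hxa hxb y hy
  exact colIn_univ_iff.mpr
    (gamma_col hpps1 hL.1 ha hb hab (colIn_col hxa) (colIn_col hxb) y hy)

lemma block_col {B : Set P} (hB : IsBlock Ls B) {a b : P} (ha : a ∈ B) (hb : b ∈ B) :
    Col Ls a b := colIn_col (hB.1.2 a ha b hb)

lemma block_extend {B : Set P} (hg : GammaIn Ls Set.univ) (hB : IsBlock Ls B) {u : P}
    (hu : ∀ b ∈ B, Col Ls u b) (huB : u ∉ B) : False := by
  have hcl : ∀ a ∈ insert u B, ∀ b ∈ insert u B, ColIn Ls Set.univ a b := by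
    intro a ha b hb
    rcases ha with rfl | ha <;> rcases hb with rfl | hb
    · exact colIn_refl _ _
    · exact colIn_univ_iff.mpr (hu b hb)
    · exact colIn_univ_iff.mpr (col_symm (hu a ha))
    · exact hB.1.2 a ha b hb
  have hsing := spanIn_isSingularIn hg (Set.subset_univ (insert u B)) hcl
  have hTB := hB.2 _ hsing
    ((Set.subset_insert u B).trans (subset_spanIn Ls Set.univ (insert u B)))
  exact huB (hTB ▸ subset_spanIn Ls Set.univ (insert u B) (Set.mem_insert u B))

lemma block_nonempty {B : Set P} (hB : IsBlock Ls B) (p : P) (hp : p ∉ B) : B.Nonempty := by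
  rcases Set.eq_empty_or_nonempty B with hBe | h
  · exfalso
    have hEq := hB.2 {p} (singleton_isSingularIn Ls (Set.mem_univ p)) (by simp [hBe])
    exact hp (hEq ▸ Set.mem_singleton p)
  · exact h

end Aux

section Symp

variable {Ls : Set (Set P)}

/-- Bundled facts about the symplecton determined by a non-collinear pair. -/
lemma symp_basics (hΓ : ImbrexGeometry Ls) (hrk : SympRank Ls 2) {x y : P}
    (h : ¬ Col Ls x y) :
    ∃ S, SmallestConvex Ls x y S ∧ IsSubspace Ls S ∧ GammaIn Ls S ∧
      (∀ n : ℕ, ∀ f : Fin n → Set P, (∀ i, IsSingularIn Ls S (f i)) →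
        (∀ i j, i < j → f i ⊂ f j) → n ≤ 3) ∧
      (∀ z ∈ S, ∀ L, LineIn Ls S L → z ∉ L →
        (∃! t, t ∈ L ∧ ColIn Ls S z t) ∨ ∀ t ∈ L, ColIn Ls S z t) ∧
      (∀ c ∈ S, ∃ z ∈ S, z ≠ c ∧ ColIn Ls S c z) := by
  obtain ⟨S, hsc, r, hr2, hps⟩ := hΓ.spp.pps2 x y h
  have hR2 : HasPolarRank Ls S 2 := hrk S ⟨x, y, h, hsc⟩
  have hbs := hps.2.2.2
  have h3 := hps.1
  have hrank : ∀ n : ℕ, ∀ f : Fin n → Set P, (∀ i, IsSingularIn Ls S (f i)) →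
      (∀ i j, i < j → f i ⊂ f j) → n ≤ 3 := by
    intro n f h1 h2
    have := hR2.1 n f h1 h2
    omega
  refine ⟨S, hsc, hsc.1.1, gammaIn_of_bs hbs, hrank, hbs, ?_⟩
  -- a line of S exists
  obtain ⟨f, hfs, hfm⟩ := hR2.2
  have h01 : f 0 ⊂ f 1 := hfm 0 1 (by decide)
  have h12 : f 1 ⊂ f 2 := hfm 1 2 (by decide)
  obtain ⟨a0, ha1, ha0⟩ := Set.exists_of_ssubset h01
  obtain ⟨c0, hc2, hc1⟩ := Set.exists_of_ssubset h12
  have hane : a0 ≠ c0 := fun he => hc1 (he ▸ ha1)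
  have hcola : ColIn Ls S a0 c0 := (hfs 2).2 a0 (h12.1 ha1) c0 hc2
  obtain ⟨L0, hL0, haL0, hcL0⟩ : ∃ L0, LineIn Ls S L0 ∧ a0 ∈ L0 ∧ c0 ∈ L0 := by
    rcases hcola with he | ⟨L0, hL0, h1, h2⟩
    · exact absurd he hane
    · exact ⟨L0, hL0, h1, h2⟩
  intro c hc
  obtain ⟨u, hu, v, hv, w, hw, huv, huw, hvw⟩ := h3 L0 hL0
  by_cases hcL : c ∈ L0
  · by_cases hum : u = c
    · refine ⟨v, hL0.2 hv, fun he => huv (hum.trans he.symm), Or.inr ⟨L0, hL0, hcL, hv⟩⟩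
    · exact ⟨u, hL0.2 hu, hum, Or.inr ⟨L0, hL0, hcL, hu⟩⟩
  · rcases hbs c hc L0 hL0 hcL with ⟨t, ⟨htL, hct⟩, _⟩ | hall
    · exact ⟨t, hL0.2 htL, fun he => hcL (he ▸ htL), hct⟩
    · exact ⟨u, hL0.2 hu, fun he => hcL (he ▸ hu), hall u hu⟩

lemma symp_mem_unique {S B : Set P} (hsubS : IsSubspace Ls S)
    (hbs : ∀ z ∈ S, ∀ L, LineIn Ls S L → z ∉ L →
      (∃! t, t ∈ L ∧ ColIn Ls S z t) ∨ ∀ t ∈ L, ColIn Ls S z t)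
    (hB : IsBlock Ls B) {p : P} (hpS : p ∈ S) (hnc : ∀ b ∈ B, ¬ Col Ls p b)
    {q u : P} (hq : q ∈ S) (hqB : q ∈ B) (hu : u ∈ S) (huB : u ∈ B) : u = q := by
  by_contra hne
  rcases block_col hB huB hqB with he | ⟨N, hN, huN, hqN⟩
  · exact hne he
  have hNB : N ⊆ B := hB.1.1.2 N ⟨hN, Set.subset_univ N⟩ u huN q hqN hne huB hqB
  have hNS : N ⊆ S := hsubS.2 N ⟨hN, Set.subset_univ N⟩ u huN q hqN hne hu hq
  have hpN : p ∉ N := fun hpN => hnc p (hNB hpN) (col_refl Ls p)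
  rcases hbs p hpS N ⟨hN, hNS⟩ hpN with ⟨t, ⟨htN, hpt⟩, _⟩ | hall
  · exact hnc t (hNB htN) (colIn_col hpt)
  · exact hnc u (hNB huN) (colIn_col (hall u huN))

lemma block_two_points (hΓ : ImbrexGeometry Ls) (hrk : SympRank Ls 2)
    (hg : GammaIn Ls Set.univ) {B : Set P} (hB : IsBlock Ls B)
    {p : P} (hp : p ∉ B) (hnc : ∀ b ∈ B, ¬ Col Ls p b) :
    ∃ q1 ∈ B, ∃ q2 ∈ B, q1 ≠ q2 := by
  obtain ⟨b1, hb1⟩ := block_nonempty hB p hp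
  obtain ⟨S, hsc, hsub, hgS, hrank, hbs, hnbr⟩ := symp_basics hΓ hrk (hnc b1 hb1)
  obtain ⟨z, hzS, hzb, hcz⟩ := hnbr b1 hsc.2.2.1
  by_contra hcon
  push_neg at hcon
  have hBsub : B ⊆ {b1} := fun u hu => Set.mem_singleton_iff.mpr (hcon u hu b1 hb1)
  have hcolbz : Col Ls b1 z := colIn_col hcz
  have hcl : ∀ a ∈ ({b1, z} : Set P), ∀ c ∈ ({b1, z} : Set P),
      ColIn Ls Set.univ a c := by
    intro a ha c hc
    rcases ha with rfl | ha <;> rcases hc with rfl | hc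
    · exact colIn_refl _ _
    · exact colIn_univ_iff.mpr ((Set.mem_singleton_iff.mp hc) ▸ hcolbz)
    · exact colIn_univ_iff.mpr (col_symm ((Set.mem_singleton_iff.mp ha) ▸ hcolbz))
    · rw [Set.mem_singleton_iff] at ha hc
      exact Or.inl (ha.trans hc.symm)
  have hsing := spanIn_isSingularIn hg (Set.subset_univ ({b1, z} : Set P)) hcl
  have hTB := hB.2 _ hsing
    (hBsub.trans (Set.singleton_subset_iff.mpr
      (subset_spanIn Ls Set.univ ({b1, z} : Set P) (Set.mem_insert b1 {z}))))
  have hzB : z ∈ B := hTB ▸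
    (subset_spanIn Ls Set.univ ({b1, z} : Set P) (Set.mem_insert_iff.mpr (Or.inr rfl)))
  exact hzb (Set.mem_singleton_iff.mp (hBsub hzB))

end Symp

/-- In an imbrex geometry of symplectic rank 2, a point outside a block is
collinear with exactly one point of the block. -/
theorem point_block_unique_collinear (Ls : Set (Set P))
    (hΓ : ImbrexGeometry Ls) (hrk : SympRank Ls 2)
    (p : P) (B : Set P) (hB : IsBlock Ls B) (hp : p ∉ B) :
    ∃! q : P, q ∈ B ∧ Col Ls p q := by
  have hg : GammaIn Ls Set.univ := gammaIn_univ hΓ.spp.pps1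
  -- Uniqueness: p cannot be collinear with two distinct points of B.
  have huniq : ∀ q1 q2 : P, q1 ∈ B ∧ Col Ls p q1 → q2 ∈ B ∧ Col Ls p q2 → q1 = q2 := by
    rintro q1 q2 ⟨hq1B, hpq1⟩ ⟨hq2B, hpq2⟩
    by_contra hne
    obtain ⟨M, hM, hq1M, hq2M⟩ : ∃ M ∈ Ls, q1 ∈ M ∧ q2 ∈ M := by
      rcases block_col hB hq1B hq2B with heq | ⟨M, hM, h1, h2⟩
      · exact absurd heq hne
      · exact ⟨M, hM, h1, h2⟩
    have hMB : M ⊆ B := hB.1.1.2 M ⟨hM, Set.subset_univ M⟩ q1 hq1M q2 hq2M hne hq1B hq2B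
    have hpM : p ∉ M := fun h => hp (hMB h)
    have pall : ∀ y ∈ M, Col Ls p y :=
      gamma_col hΓ.spp.pps1 hM hq1M hq2M hne hpq1 hpq2
    by_cases hall : ∀ b ∈ B, Col Ls p b
    · exact block_extend hg hB hall hp
    · push_neg at hall
      obtain ⟨b, hbB, hpb⟩ := hall
      obtain ⟨S, hsc, hsub, hgS, hrank, hbs, hnbr⟩ := symp_basics hΓ hrk hpb
      have hpS : p ∈ S := hsc.2.1
      have hbS : b ∈ S := hsc.2.2.1
      have hq1S : q1 ∈ S := hsc.1.2 p hpS b hbS hpb q1 hpq1 (block_col hB hq1B hbB)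
      have hq2S : q2 ∈ S := hsc.1.2 p hpS b hbS hpb q2 hpq2 (block_col hB hq2B hbB)
      have hMS : M ⊆ S := hsub.2 M ⟨hM, Set.subset_univ M⟩ q1 hq1M q2 hq2M hne hq1S hq2S
      exact no_plane' hrank hgS ⟨hM, hMS⟩ hq1M hq2M hne hpS
        (fun y hy => colIn_of_col hsub hpS (hMS hy) (pall y hy))
        hbS (fun y hy => colIn_of_col hsub hbS (hMS hy) (block_col hB hbB (hMB hy)))
        (fun h => hpb (col_symm (colIn_col h)))
  -- Existence
  have hex : ∃ q, q ∈ B ∧ Col Ls p q := by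
    by_contra hcon
    push_neg at hcon
    obtain ⟨q1, hq1B, q2, hq2B, hne⟩ := block_two_points hΓ hrk hg hB hp hcon
    obtain ⟨M, hM, hq1M, hq2M⟩ : ∃ M ∈ Ls, q1 ∈ M ∧ q2 ∈ M := by
      rcases block_col hB hq1B hq2B with heq | ⟨M, hM, h1, h2⟩
      · exact absurd heq hne
      · exact ⟨M, hM, h1, h2⟩
    have hMB : M ⊆ B := hB.1.1.2 M ⟨hM, Set.subset_univ M⟩ q1 hq1M q2 hq2M hne hq1B hq2B
    have hnM : ∀ y ∈ M, ¬ Col Ls p y := fun y hy => hcon y (hMB hy)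
    obtain ⟨S1, hsc1, hsub1, hgS1, hrank1, hbs1, hnbr1⟩ := symp_basics hΓ hrk (hcon q1 hq1B)
    obtain ⟨S2, hsc2, hsub2, hgS2, hrank2, hbs2, hnbr2⟩ := symp_basics hΓ hrk (hcon q2 hq2B)
    obtain ⟨hW1, hW2⟩ := hΓ.imb p M hM hnM q1 hq1M q2 hq2M hne S1 S2 hsc1 hsc2
    have hpS1 : p ∈ S1 := hsc1.2.1
    have hpS2 : p ∈ S2 := hsc2.2.1
    have hq1S1 : q1 ∈ S1 := hsc1.2.2.1
    have hq2S2 : q2 ∈ S2 := hsc2.2.2.1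
    have hpW : p ∈ S1 ∩ S2 := ⟨hpS1, hpS2⟩
    have hint1 : ∀ u ∈ S1, u ∈ B → u = q1 := fun u hu huB =>
      symp_mem_unique hsub1 hbs1 hB hpS1 hcon hq1S1 hq1B hu huB
    have hint2 : ∀ u ∈ S2, u ∈ B → u = q2 := fun u hu huB =>
      symp_mem_unique hsub2 hbs2 hB hpS2 hcon hq2S2 hq2B hu huB
    have hq1W : q1 ∉ S1 ∩ S2 := fun h => hne (hint2 q1 h.2 hq1B)
    have hq2W : q2 ∉ S1 ∩ S2 := fun h => hne ((hint1 q2 h.1 hq2B).symm)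
    -- the intersection W contains a second point
    have hW : ∃ w ∈ S1 ∩ S2, w ≠ p := by
      by_contra hcc
      push_neg at hcc
      obtain ⟨z, hzS, hzp, hpz⟩ := hnbr1 p hpS1
      have hclpz : ∀ a ∈ ({p, z} : Set P), ∀ c ∈ ({p, z} : Set P), ColIn Ls S1 a c := by
        intro a ha c hc
        rcases ha with rfl | ha <;> rcases hc with rfl | hc
        · exact colIn_refl _ _
        · exact (Set.mem_singleton_iff.mp hc) ▸ hpz
        · exact colIn_symm ((Set.mem_singleton_iff.mp ha) ▸ hpz)
        · rw [Set.mem_singleton_iff] at ha hc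
          exact Or.inl (ha.trans hc.symm)
      have hsing := spanIn_isSingularIn hgS1
        (Set.insert_subset hpS1 (Set.singleton_subset_iff.mpr hzS)) hclpz
      have hWT : S1 ∩ S2 ⊆ spanIn Ls S1 {p, z} := fun w hw =>
        (hcc w hw) ▸ subset_spanIn Ls S1 ({p, z} : Set P) (Set.mem_insert p {z})
      have hEq := hW1.2 _ hsing hWT
      have hzW : z ∈ S1 ∩ S2 := hEq ▸
        subset_spanIn Ls S1 ({p, z} : Set P) (Set.mem_insert_iff.mpr (Or.inr rfl))
      exact hzp (hcc z hzW)
    obtain ⟨w, hwW, hwp⟩ := hW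
    have hColpw : ColIn Ls S1 p w := hW1.1.2 p hpW w hwW
    obtain ⟨LW, hLW, hpLW, hwLW⟩ : ∃ L, LineIn Ls S1 L ∧ p ∈ L ∧ w ∈ L := by
      rcases hColpw with heq | ⟨L, hL, h1, h2⟩
      · exact absurd heq.symm hwp
      · exact ⟨L, hL, h1, h2⟩
    have hpw' : p ≠ w := fun h => hwp h.symm
    have hLWW : LW ⊆ S1 ∩ S2 := hW1.1.1.2 LW hLW p hpLW w hwLW hpw' hpW hwW
    have hLW2 : LineIn Ls S2 LW := ⟨hLW.1, hLWW.trans Set.inter_subset_right⟩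
    have hspan1 : spanIn Ls S1 LW ⊆ S1 ∩ S2 := spanIn_subset hW1.1.1 hLWW
    have hspan2 : spanIn Ls S2 LW ⊆ S1 ∩ S2 := spanIn_subset hW2.1.1 hLWW
    have hq1LW : q1 ∉ LW := fun h => hq1W (hLWW h)
    have hq2LW : q2 ∉ LW := fun h => hq2W (hLWW h)
    obtain ⟨u1, hu1LW, hu1col, hu1uniq⟩ :
        ∃ u1, u1 ∈ LW ∧ ColIn Ls S1 q1 u1 ∧ ∀ t, t ∈ LW ∧ ColIn Ls S1 q1 t → t = u1 := by
      rcases hbs1 q1 hq1S1 LW hLW hq1LW with ⟨u, ⟨h1, h2⟩, h3⟩ | hall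
      · exact ⟨u, h1, h2, h3⟩
      · exact (no_plane hrank1 hgS1 hLW hpLW hwLW hpw' hq1S1 hall
          (fun hmem => hq1W (hspan1 hmem))).elim
    obtain ⟨u2, hu2LW, hu2col, hu2uniq⟩ :
        ∃ u2, u2 ∈ LW ∧ ColIn Ls S2 q2 u2 ∧ ∀ t, t ∈ LW ∧ ColIn Ls S2 q2 t → t = u2 := by
      rcases hbs2 q2 hq2S2 LW hLW2 hq2LW with ⟨u, ⟨h1, h2⟩, h3⟩ | hall
      · exact ⟨u, h1, h2, h3⟩
      · exact (no_plane hrank2 hgS2 hLW2 hpLW hwLW hpw' hq2S2 hall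
          (fun hmem => hq2W (hspan2 hmem))).elim
    by_cases huu : u1 = u2
    · -- one common "gate" u1: it is collinear with the whole line M
      subst huu
      have hcu1 : Col Ls u1 q1 := col_symm (colIn_col hu1col)
      have hcu2 : Col Ls u1 q2 := col_symm (colIn_col hu2col)
      have huM : ∀ y ∈ M, Col Ls u1 y :=
        gamma_col hΓ.spp.pps1 hM hq1M hq2M hne hcu1 hcu2
      have hu1W : u1 ∈ S1 ∩ S2 := hLWW hu1LW
      have hcu1p : Col Ls p u1 := colIn_col (hW1.1.2 p hpW u1 hu1W)
      have hu1B : u1 ∉ B := fun h => hcon u1 h hcu1p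
      by_cases hall : ∀ b ∈ B, Col Ls u1 b
      · exact block_extend hg hB hall hu1B
      · push_neg at hall
        obtain ⟨b', hb'B, hub'⟩ := hall
        obtain ⟨T, hscT, hsubT, hgT, hrankT, hbsT, hnbrT⟩ := symp_basics hΓ hrk hub'
        have hu1T : u1 ∈ T := hscT.2.1
        have hb'T : b' ∈ T := hscT.2.2.1
        have hq1T : q1 ∈ T :=
          hscT.1.2 u1 hu1T b' hb'T hub' q1 hcu1 (block_col hB hq1B hb'B)
        have hq2T : q2 ∈ T :=
          hscT.1.2 u1 hu1T b' hb'T hub' q2 hcu2 (block_col hB hq2B hb'B)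
        have hMT : M ⊆ T := hsubT.2 M ⟨hM, Set.subset_univ M⟩ q1 hq1M q2 hq2M hne hq1T hq2T
        exact no_plane' hrankT hgT ⟨hM, hMT⟩ hq1M hq2M hne hu1T
          (fun y hy => colIn_of_col hsubT hu1T (hMT hy) (huM y hy))
          hb'T (fun y hy => colIn_of_col hsubT hb'T (hMT hy) (block_col hB hb'B (hMB hy)))
          (fun h => hub' (col_symm (colIn_col h)))
    · -- two distinct gates: a symplecton through M and LW arises, absurd
      have hu1S2 : u1 ∈ S2 := (hLWW hu1LW).2
      have hncu1q2 : ¬ Col Ls u1 q2 := by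
        intro hc
        exact huu (hu2uniq u1 ⟨hu1LW, colIn_of_col hsub2 hq2S2 hu1S2 (col_symm hc)⟩)
      obtain ⟨X, hscX, hsubX, hgX, hrankX, hbsX, hnbrX⟩ := symp_basics hΓ hrk hncu1q2
      have hu1X : u1 ∈ X := hscX.2.1
      have hq2X : q2 ∈ X := hscX.2.2.1
      have hq1X : q1 ∈ X := hscX.1.2 u1 hu1X q2 hq2X hncu1q2 q1
        (col_symm (colIn_col hu1col)) (Or.inr ⟨M, hM, hq1M, hq2M⟩)
      have hu2X : u2 ∈ X := hscX.1.2 u1 hu1X q2 hq2X hncu1q2 u2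
        (Or.inr ⟨LW, hLW.1, hu1LW, hu2LW⟩) (col_symm (colIn_col hu2col))
      have hMX : M ⊆ X := hsubX.2 M ⟨hM, Set.subset_univ M⟩ q1 hq1M q2 hq2M hne hq1X hq2X
      have hLWX : LW ⊆ X :=
        hsubX.2 LW ⟨hLW.1, Set.subset_univ LW⟩ u1 hu1LW u2 hu2LW huu hu1X hu2X
      have hpX : p ∈ X := hLWX hpLW
      have hpM : p ∉ M := fun h => hp (hMB h)
      rcases hbsX p hpX M ⟨hM, hMX⟩ hpM with ⟨t, ⟨htM, hpt⟩, _⟩ | hall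
      · exact hcon t (hMB htM) (colIn_col hpt)
      · exact hcon q1 hq1B (colIn_col (hall q1 hq1M))
  obtain ⟨q, hqB, hqc⟩ := hex
  exact ⟨q, ⟨hqB, hqc⟩, fun y hy => huniq y q hy ⟨hqB, hqc⟩⟩

end ImbrexGeom
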